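/- arXiv:1301.6594 — 7 statements merged into one kernel-verified Lean document; each statement's English description precedes it below -/
import Mathlib

section
/- Let d > -1. For b ∈ ℝ \ {0}, the complex number ib satisfies 1 + e^(-ib) + 2d·(1 - e^(-ib))/(ib) = 0 if and only if cos b ≠ 1 and -(b/2)·cot(b/2) = d. -/
/-! Factoring out `exp (-(I * b / 2))` turns `1 + e^{-ib}` into `2 cos (b/2)` and `1 - e^{-ib}` into
`2 i sin (b/2)`, so the equation becomes the real equation `b cos (b/2) + 2 d sin (b/2) = 0`.
Since `sin (b/2)` and `cos (b/2)` never vanish together and `b ≠ 0`, a solution has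
`sin (b/2) ≠ 0`, i.e. `cos b ≠ 1`, and can then be divided by `sin (b/2)`. -/

open Complex

namespace Complex

theorem one_add_exp_neg_I_mul (x : ℂ) :
    1 + exp (-(I * x)) = 2 * cos (x / 2) * exp (-(I * x / 2)) := by
  have hsum : x / 2 * I + -(I * x / 2) = 0 := by ring
  have hdiff : -(x / 2) * I + -(I * x / 2) = -(I * x) := by ring
  rw [two_cos, add_mul, ← exp_add, ← exp_add, hsum, hdiff, exp_zero]

theorem one_sub_exp_neg_I_mul (x : ℂ) :
    1 - exp (-(I * x)) = 2 * I * sin (x / 2) * exp (-(I * x / 2)) := by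
  have hsum : x / 2 * I + -(I * x / 2) = 0 := by ring
  have hdiff : -(x / 2) * I + -(I * x / 2) = -(I * x) := by ring
  have h1 : exp (x / 2 * I) * exp (-(I * x / 2)) = 1 := by rw [← exp_add, hsum, exp_zero]
  have h2 : exp (-(x / 2) * I) * exp (-(I * x / 2)) = exp (-(I * x)) := by rw [← exp_add, hdiff]
  rw [mul_right_comm 2, two_sin]
  linear_combination (exp (x / 2 * I) - exp (-(x / 2) * I)) * exp (-(I * x / 2)) * I_sq - h1 + h2

theorem one_add_exp_add_mul_one_sub_exp_div (b d : ℂ) (hb : b ≠ 0) :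
    1 + exp (-(I * b)) + 2 * d * (1 - exp (-(I * b))) / (I * b) =
      2 * exp (-(I * b / 2)) * (b * cos (b / 2) + 2 * d * sin (b / 2)) / b := by
  rw [one_add_exp_neg_I_mul, one_sub_exp_neg_I_mul]
  field_simp

end Complex

namespace Real

theorem cos_ne_one_iff_sin_half_ne_zero (x : ℝ) : cos x ≠ 1 ↔ sin (x / 2) ≠ 0 := by
  have hcos : cos x = 1 - 2 * sin (x / 2) ^ 2 := by
    have h := cos_two_mul (x / 2)
    rw [mul_div_cancel₀ x two_ne_zero] at h
    linear_combination h + 2 * sin_sq_add_cos_sq (x / 2)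
  simp [hcos]

theorem mul_cos_half_add_mul_sin_half_eq_zero_iff {b d : ℝ} (hb : b ≠ 0) :
    b * cos (b / 2) + 2 * d * sin (b / 2) = 0 ↔ cos b ≠ 1 ∧ -(b / 2) * cot (b / 2) = d := by
  have hcot (hs : sin (b / 2) ≠ 0) :
      b * cos (b / 2) + 2 * d * sin (b / 2) = 0 ↔ -(b / 2) * cot (b / 2) = d := by
    rw [cot_eq_cos_div_sin]
    field_simp
    constructor <;> intro h <;> linarith
  constructor
  · intro h
    have hs : sin (b / 2) ≠ 0 := by
      intro hs
      have hc : cos (b / 2) ≠ 0 := fun hc => by simpa [hs, hc] using sin_sq_add_cos_sq (b / 2)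
      rw [hs, mul_zero, add_zero] at h
      exact mul_ne_zero hb hc h
    exact ⟨(cos_ne_one_iff_sin_half_ne_zero b).mpr hs, (hcot hs).mp h⟩
  · rintro ⟨hcos, hd⟩
    exact (hcot ((cos_ne_one_iff_sin_half_ne_zero b).mp hcos)).mpr hd

end Real

theorem stmt_3_general (d : ℝ) (b : ℝ) (hb : b ≠ 0) :
    (1 + Complex.exp (-(Complex.I * b)) +
        2 * (d : ℂ) * (1 - Complex.exp (-(Complex.I * b))) / (Complex.I * b) = 0) ↔
      (Real.cos b ≠ 1 ∧ -(b / 2) * Real.cot (b / 2) = d) := by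
  have hb' : (b : ℂ) ≠ 0 := ofReal_ne_zero.mpr hb
  rw [one_add_exp_add_mul_one_sub_exp_div _ _ hb', div_eq_zero_iff, mul_eq_zero,
    or_iff_left hb', or_iff_right (mul_ne_zero two_ne_zero (exp_ne_zero _)),
    ← Real.mul_cos_half_add_mul_sin_half_eq_zero_iff hb]
  norm_cast

theorem stmt_3 (d : ℝ) (hd : -1 < d) (b : ℝ) (hb : b ≠ 0) :
    (1 + Complex.exp (-(Complex.I * b)) +
        2 * (d : ℂ) * (1 - Complex.exp (-(Complex.I * b))) / (Complex.I * b) = 0) ↔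
      (Real.cos b ≠ 1 ∧ -(b / 2) * Real.cot (b / 2) = d) :=
  stmt_3_general d b hb
end

section
/- If |k| < 1 and d ∈ ℝ, θ ∈ [0,1], then the function f_{θd,k}(μ) = 1 - k·e^(-μ) + θd(1-k)(1-e^(-μ))/μ has no zero on the imaginary axis away from the origin: for every nonzero real b, f_{θd,k}(ib) ≠ 0. -/
/-! Multiplying by `μ = ib` turns `f(ib) = 0` into `ib (1 - k e^{-ib}) + c (1 - e^{-ib}) = 0`
with `c = θd(1-k)` real. Eliminating `c` between the real and imaginary parts leaves
`b (1 + k) (1 - cos b) = 0`, so `e^{-ib} = 1`, and then the equation reads `ib (1 - k) = 0`. -/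

open Complex

/-- The real and imaginary parts of `ib (1 - k (C - iS)) + c (1 - (C - iS)) = 0`. -/
lemma not_real_imag_parts_eq_zero {b c k C S : ℝ} (hb : b ≠ 0) (hk_one : k ≠ 1)
    (hk_neg_one : k ≠ -1) (hCS : S ^ 2 + C ^ 2 = 1) :
    ¬ (-(k * S * b) + c * (1 - C) = 0 ∧ (1 - k * C) * b + c * S = 0) := by
  rintro ⟨hre, him⟩
  have hc_free : b * (1 + k) * (1 - C) = 0 := by
    linear_combination -S * hre + (1 - C) * him - b * k * hCS
  have hC : C = 1 := by
    have h1k : 1 + k ≠ 0 := fun h => hk_neg_one (by linarith)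
    linarith [(mul_eq_zero.mp hc_free).resolve_left (mul_ne_zero hb h1k)]
  have hS : S = 0 := by simpa [hC] using hCS
  have : (1 - k) * b = 0 := by simpa [hC, hS] using him
  exact hk_one (by linarith [(mul_eq_zero.mp this).resolve_right hb])

lemma exp_neg_I_mul_ofReal (b : ℝ) :
    exp (-(I * b)) = ⟨Real.cos b, -Real.sin b⟩ := by
  rw [show -(I * b) = ((-b : ℝ) : ℂ) * I by push_cast; ring]
  apply Complex.ext
  · exact (exp_ofReal_mul_I_re _).trans (Real.cos_neg b)
  · exact (exp_ofReal_mul_I_im _).trans (Real.sin_neg b)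

lemma I_mul_mul_one_sub_mul_exp_add_ne_zero {b c k : ℝ} (hb : b ≠ 0) (hk_one : k ≠ 1)
    (hk_neg_one : k ≠ -1) :
    (1 - k * exp (-(I * b))) * (I * b) + c * (1 - exp (-(I * b))) ≠ 0 := by
  intro h
  apply not_real_imag_parts_eq_zero hb hk_one hk_neg_one (Real.sin_sq_add_cos_sq b)
  rw [exp_neg_I_mul_ofReal] at h
  constructor
  · simpa using congrArg re h
  · simpa using congrArg im h

theorem stmt_5_general (d k θ : ℝ) (hk : |k| < 1)
    (b : ℝ) (hb : b ≠ 0) :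
    1 - (k : ℂ) * Complex.exp (-(Complex.I * b)) +
      (θ : ℂ) * (d : ℂ) * (1 - (k : ℂ)) * (1 - Complex.exp (-(Complex.I * b))) /
        (Complex.I * b) ≠ 0 := by
  obtain ⟨hk_gt, hk_lt⟩ := abs_lt.mp hk
  have hb' : (b : ℂ) ≠ 0 := ofReal_ne_zero.mpr hb
  refine fun h => I_mul_mul_one_sub_mul_exp_add_ne_zero (c := θ * d * (1 - k)) hb hk_lt.ne
    hk_gt.ne' ?_
  rw [← zero_mul (I * (b : ℂ)), ← h]
  push_cast
  field_simp

theorem stmt_5 (d k θ : ℝ) (hk : |k| < 1) (hθ : θ ∈ Set.Icc (0:ℝ) 1)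
    (b : ℝ) (hb : b ≠ 0) :
    1 - (k : ℂ) * Complex.exp (-(Complex.I * b)) +
      (θ : ℂ) * (d : ℂ) * (1 - (k : ℂ)) * (1 - Complex.exp (-(Complex.I * b))) /
        (Complex.I * b) ≠ 0 :=
  stmt_5_general d k θ hk b hb
end

section
/- Let |d| < 1, |k| < 1, β > 0 with e^(-β) > k² and a := d·(e^(-β) - k)/(1 - k). Then for any C¹ solution ρ of the linear system ρ_t + ρ_x = 0 on (0,∞)×(0,1) with boundary condition ρ(t,0) = kρ(t,1) + (k-1)dW(t) where W(t) = ∫₀¹ρ(t,x)dx, the Lyapunov function L(t) = ∫₀¹ e^(-βx) ρ²(t,x) dx + a·W(t)² satisfies L̇(t) ≤ -β(1 - d²(e^β - 1)²e^(-β)β^(-2)) ∫₀¹ e^(-βx) ρ²(t,x) dx for all t ≥ 0. -/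
/-!
Differentiating under the integral sign and trading `ρ_t` for `-ρ_x`, an integration by parts
gives `d/dt ∫₀¹ e^{-βx} ρ² = ρ(t,0)² - e^{-β} ρ(t,1)² - β ∫₀¹ e^{-βx} ρ²` and
`Ẇ = ρ(t,0) - ρ(t,1)`. After inserting the boundary condition, the value of `a` is exactly the
one for which the boundary terms of `L̇` collapse to
`(k² - e^{-β}) (ρ(t,1) + d W)² + d² (1 - e^{-β}) W²`. The first square has a nonpositive
coefficient, and the second is absorbed by the weighted Cauchy–Schwarz inequality
`W² ≤ (e^β - 1)/β · ∫₀¹ e^{-βx} ρ²`.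
-/

open intervalIntegral

theorem hasDerivAt_intervalIntegral_of_continuous {E : Type*} [NormedAddCommGroup E]
    [NormedSpace ℝ E] {φ φ' : ℝ → ℝ → E} (hφ : Continuous fun p : ℝ × ℝ => φ p.1 p.2)
    (hφ' : Continuous fun p : ℝ × ℝ => φ' p.1 p.2)
    (hderiv : ∀ t x, HasDerivAt (fun s => φ s x) (φ' t x) t) (a b t₀ : ℝ) :
    HasDerivAt (fun t => ∫ x in a..b, φ t x) (∫ x in a..b, φ' t₀ x) t₀ := by
  obtain ⟨C, hC⟩ := (isCompact_Icc.prod isCompact_uIcc).exists_bound_of_continuousOn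
    (s := Set.Icc (t₀ - 1) (t₀ + 1) ×ˢ Set.uIcc a b) hφ'.continuousOn
  refine (hasDerivAt_integral_of_dominated_loc_of_deriv_le (bound := fun _ => C)
    (Metric.ball_mem_nhds t₀ one_pos)
    (.of_forall fun t => (hφ.comp (.prodMk_right t)).aestronglyMeasurable)
    ((hφ.comp (.prodMk_right t₀)).intervalIntegrable a b)
    (hφ'.comp (.prodMk_right t₀)).aestronglyMeasurable ?_ intervalIntegrable_const
    (.of_forall fun x _ s _ => hderiv s x)).2
  refine .of_forall fun x hx s hs => hC (s, x) ⟨?_, Set.uIoc_subset_uIcc hx⟩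
  rw [Metric.mem_ball, Real.dist_eq, abs_sub_lt_iff] at hs
  constructor <;> linarith

theorem sq_intervalIntegral_mul_le {f g : ℝ → ℝ} {a b : ℝ} (hab : a ≤ b) (hf : Continuous f)
    (hg : Continuous g) :
    (∫ x in a..b, f x * g x) ^ 2 ≤ (∫ x in a..b, f x ^ 2) * ∫ x in a..b, g x ^ 2 := by
  have hquad : ∀ s : ℝ, 0 ≤ (∫ x in a..b, f x ^ 2) * (s * s)
      + (-2 * ∫ x in a..b, f x * g x) * s + ∫ x in a..b, g x ^ 2 := by
    intro s
    have hexpand : ∫ x in a..b, (s * f x - g x) ^ 2 = (∫ x in a..b, f x ^ 2) * (s * s)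
        + (-2 * ∫ x in a..b, f x * g x) * s + ∫ x in a..b, g x ^ 2 := by
      have hint : ∀ h : ℝ → ℝ, Continuous h → IntervalIntegrable h MeasureTheory.volume a b :=
        fun h hh => hh.intervalIntegrable a b
      simp_rw [sub_sq, mul_pow]
      rw [integral_add (hint _ (by fun_prop)) (hint _ (by fun_prop)),
        integral_sub (hint _ (by fun_prop)) (hint _ (by fun_prop))]
      simp only [integral_const_mul, mul_assoc]
      ring
    exact hexpand ▸ integral_nonneg hab fun x _ => sq_nonneg _
  have := discrim_le_zero hquad
  rw [discrim] at this
  linarith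

theorem integral_exp_mul {a b c : ℝ} (hc : c ≠ 0) :
    ∫ x in a..b, Real.exp (c * x) = (Real.exp (c * b) - Real.exp (c * a)) / c := by
  rw [integral_comp_mul_left (fun x => Real.exp x) hc, integral_exp, smul_eq_mul, inv_mul_eq_div]

theorem sq_intervalIntegral_le_mul_integral_exp_mul_sq {β : ℝ} (hβ : β ≠ 0) {g : ℝ → ℝ}
    (hg : Continuous g) :
    (∫ x in (0:ℝ)..1, g x) ^ 2
      ≤ (Real.exp β - 1) / β * ∫ x in (0:ℝ)..1, Real.exp (-β * x) * g x ^ 2 := by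
  have hsplit : ∀ x, g x = Real.exp (β * x / 2) * (Real.exp (-β * x / 2) * g x) := fun x => by
    rw [← mul_assoc, ← Real.exp_add]; ring_nf; simp
  have := sq_intervalIntegral_mul_le zero_le_one (f := fun x => Real.exp (β * x / 2))
    (g := fun x => Real.exp (-β * x / 2) * g x) (by fun_prop) (by fun_prop)
  have hsq : ∀ c x : ℝ, Real.exp (c * x / 2) ^ 2 = Real.exp (c * x) := fun c x => by
    rw [← Real.exp_nat_mul]; ring_nf
  simpa only [← hsplit, mul_pow, hsq, integral_exp_mul hβ, mul_one, mul_zero, Real.exp_zero]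
    using this

section Transport

variable {ρ : ℝ → ℝ → ℝ} {t a b : ℝ}

section Smooth

variable (hρ : ContDiff ℝ 1 fun p : ℝ × ℝ => ρ p.1 p.2)
include hρ

theorem ContDiff.hasDerivAt_curry_left (t x : ℝ) :
    HasDerivAt (fun s => ρ s x) (deriv (fun s => ρ s x) t) t :=
  ((hρ.differentiable one_ne_zero (t, x)).comp (f := fun s => (s, x)) t
    (differentiableAt_id.prodMk (differentiableAt_const x))).hasDerivAt

theorem ContDiff.hasDerivAt_curry_right (t x : ℝ) :
    HasDerivAt (ρ t) (deriv (ρ t) x) x :=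
  ((hρ.differentiable one_ne_zero (t, x)).comp (f := fun y => (t, y)) x
    ((differentiableAt_const t).prodMk differentiableAt_id)).hasDerivAt

theorem ContDiff.continuous_deriv_curry_left :
    Continuous fun p : ℝ × ℝ => deriv (fun s => ρ s p.2) p.1 := by
  have hderiv (t x : ℝ) : deriv (fun s => ρ s x) t
      = fderiv ℝ (fun p : ℝ × ℝ => ρ p.1 p.2) (t, x) (1, 0) :=
    ((hρ.differentiable one_ne_zero (t, x)).hasFDerivAt.comp_hasDerivAt (f := fun s => (s, x)) t
      ((hasDerivAt_id' t).prodMk (hasDerivAt_const t x))).deriv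
  simp only [hderiv]
  exact (hρ.continuous_fderiv one_ne_zero).clm_apply continuous_const

theorem ContDiff.continuous_deriv_curry_right :
    Continuous fun p : ℝ × ℝ => deriv (ρ p.1) p.2 := by
  have hderiv (t x : ℝ) : deriv (ρ t) x = fderiv ℝ (fun p : ℝ × ℝ => ρ p.1 p.2) (t, x) (0, 1) :=
    ((hρ.differentiable one_ne_zero (t, x)).hasFDerivAt.comp_hasDerivAt (f := fun y => (t, y)) x
      ((hasDerivAt_const x t).prodMk (hasDerivAt_id' x))).deriv
  simp only [hderiv]
  exact (hρ.continuous_fderiv one_ne_zero).clm_apply continuous_const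

end Smooth

variable (htransport : ∀ x ∈ Set.uIcc a b, deriv (fun s => ρ s x) t + deriv (ρ t) x = 0)
include htransport

theorem intervalIntegral_deriv_time_eq_neg_deriv_space (f : ℝ → ℝ) :
    ∫ x in a..b, f x * deriv (fun s => ρ s x) t = -∫ x in a..b, f x * deriv (ρ t) x := by
  rw [← integral_neg]
  refine integral_congr fun x hx => ?_
  rw [eq_neg_of_add_eq_zero_left (htransport x hx), mul_neg]

variable (hρ : ContDiff ℝ 1 fun p : ℝ × ℝ => ρ p.1 p.2)
include hρ

theorem hasDerivAt_intervalIntegral_of_transport :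
    HasDerivAt (fun s => ∫ x in a..b, ρ s x) (ρ t a - ρ t b) t := by
  have h := hasDerivAt_intervalIntegral_of_continuous hρ.continuous
    hρ.continuous_deriv_curry_left
    hρ.hasDerivAt_curry_left a b t
  refine h.congr_deriv ?_
  have := intervalIntegral_deriv_time_eq_neg_deriv_space htransport fun _ => 1
  simp only [one_mul] at this
  rw [this, integral_eq_sub_of_hasDerivAt
    (fun x _ => hρ.hasDerivAt_curry_right t x)
    ((hρ.continuous_deriv_curry_right.comp (.prodMk_right t)).intervalIntegrable a b)]
  ring

theorem hasDerivAt_intervalIntegral_mul_sq_of_transport {w w' : ℝ → ℝ}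
    (hw : ∀ x, HasDerivAt w (w' x) x) (hw' : Continuous w') :
    HasDerivAt (fun s => ∫ x in a..b, w x * ρ s x ^ 2)
      (w a * ρ t a ^ 2 - w b * ρ t b ^ 2 + ∫ x in a..b, w' x * ρ t x ^ 2) t := by
  have hw_cont : Continuous w := continuous_iff_continuousAt.2 fun x => (hw x).continuousAt
  have hρ_cont := hρ.continuous
  have hρt_cont := hρ.continuous_deriv_curry_left
  have h := hasDerivAt_intervalIntegral_of_continuous (φ := fun s x => w x * ρ s x ^ 2)
    (φ' := fun s x => w x * (2 * ρ s x) * deriv (fun s => ρ s x) s)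
    (by fun_prop) (by fun_prop) (fun s x =>
      (((hρ.hasDerivAt_curry_left s x).fun_pow 2).const_mul (w x)).congr_deriv (by ring)) a b t
  refine h.congr_deriv ?_
  rw [intervalIntegral_deriv_time_eq_neg_deriv_space htransport]
  have hρx_cont := hρ.continuous_deriv_curry_right
  have hibp := integral_mul_deriv_eq_deriv_mul (u := w) (v := fun x => ρ t x ^ 2)
    (v' := fun x => 2 * ρ t x * deriv (ρ t) x) (fun x _ => hw x)
    (fun x _ => by simpa using (hρ.hasDerivAt_curry_right t x).fun_pow 2)
    (hw'.intervalIntegrable a b) ((by fun_prop : Continuous _).intervalIntegrable a b)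
  simp only [mul_assoc] at hibp ⊢
  rw [hibp]
  ring

end Transport

theorem boundary_terms_eq {d k E u₀ u₁ w : ℝ} (hk : k ≠ 1)
    (hbc : u₀ = k * u₁ + (k - 1) * d * w) :
    u₀ ^ 2 - E * u₁ ^ 2 + d * (E - k) / (1 - k) * (2 * w * (u₀ - u₁))
      = (k ^ 2 - E) * (u₁ + d * w) ^ 2 + d ^ 2 * (1 - E) * w ^ 2 := by
  have hk' : 1 - k ≠ 0 := sub_ne_zero.2 hk.symm
  subst hbc
  field_simp
  ring

theorem lyapunov_derivative_le {d k β u₀ u₁ w I : ℝ} (hβ : 0 < β) (hβk : k ^ 2 < Real.exp (-β))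
    (hbc : u₀ = k * u₁ + (k - 1) * d * w) (hw : w ^ 2 ≤ (Real.exp β - 1) / β * I) :
    u₀ ^ 2 - Real.exp (-β) * u₁ ^ 2 - β * I
        + d * (Real.exp (-β) - k) / (1 - k) * (2 * w * (u₀ - u₁))
      ≤ -β * (1 - d ^ 2 * (Real.exp β - 1) ^ 2 * Real.exp (-β) * β⁻¹ ^ 2) * I := by
  have hE : Real.exp (-β) < 1 := Real.exp_lt_one_iff.2 (neg_neg_of_pos hβ)
  have hk : k ≠ 1 := by rintro rfl; linarith
  have hEinv : Real.exp (-β) * Real.exp β = 1 := by rw [← Real.exp_add, neg_add_cancel, Real.exp_zero]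
  have hboundary : (k ^ 2 - Real.exp (-β)) * (u₁ + d * w) ^ 2 ≤ 0 :=
    mul_nonpos_of_nonpos_of_nonneg (by linarith) (sq_nonneg _)
  have hmass : d ^ 2 * (1 - Real.exp (-β)) * w ^ 2
      ≤ d ^ 2 * (1 - Real.exp (-β)) * ((Real.exp β - 1) / β * I) :=
    mul_le_mul_of_nonneg_left hw (mul_nonneg (sq_nonneg d) (by linarith))
  calc _ = -β * I + (k ^ 2 - Real.exp (-β)) * (u₁ + d * w) ^ 2
        + d ^ 2 * (1 - Real.exp (-β)) * w ^ 2 := by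
        linear_combination boundary_terms_eq (E := Real.exp (-β)) hk hbc
    _ ≤ -β * I + d ^ 2 * (1 - Real.exp (-β)) * ((Real.exp β - 1) / β * I) := by linarith
    _ = _ := by
        field_simp
        linear_combination (-(d ^ 2 * (Real.exp β - 1) * I)) * hEinv

theorem stmt_10_general (d k β : ℝ) (hβ : 0 < β)
    (hβk : k ^ 2 < Real.exp (-β)) (ρ : ℝ → ℝ → ℝ)
    (hρ : ContDiff ℝ 1 (fun p : ℝ × ℝ => ρ p.1 p.2))
    (hpde : ∀ t ≥ (0:ℝ), ∀ x ∈ Set.Icc (0:ℝ) 1,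
      deriv (fun s => ρ s x) t + deriv (fun y => ρ t y) x = 0)
    (hbc : ∀ t ≥ (0:ℝ),
      ρ t 0 = k * ρ t 1 + (k - 1) * d * ∫ x in (0:ℝ)..1, ρ t x) :
    let a := d * (Real.exp (-β) - k) / (1 - k)
    let W := fun t => ∫ x in (0:ℝ)..1, ρ t x
    let L := fun t => (∫ x in (0:ℝ)..1, Real.exp (-β * x) * ρ t x ^ 2) + a * W t ^ 2
    ∀ t ≥ (0:ℝ), ∃ D : ℝ, HasDerivAt L D t ∧
      D ≤ -β * (1 - d ^ 2 * (Real.exp β - 1) ^ 2 * Real.exp (-β) * β⁻¹ ^ 2) *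
        ∫ x in (0:ℝ)..1, Real.exp (-β * x) * ρ t x ^ 2 := by
  intro a W L t ht
  have htransport : ∀ x ∈ Set.uIcc (0:ℝ) 1, deriv (fun s => ρ s x) t + deriv (ρ t) x = 0 := by
    rw [Set.uIcc_of_le zero_le_one]
    exact hpde t ht
  have hweight (x : ℝ) : HasDerivAt (fun y => Real.exp (-β * y)) (-β * Real.exp (-β * x)) x := by
    simpa [mul_comm] using ((hasDerivAt_id' x).const_mul (-β)).exp
  have hI := hasDerivAt_intervalIntegral_mul_sq_of_transport htransport hρ hweight (by fun_prop)
  have hW := hasDerivAt_intervalIntegral_of_transport htransport hρ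
  refine ⟨_, hI.add ((hW.pow 2).const_mul a), ?_⟩
  have hweighted : ∫ x in (0:ℝ)..1, -β * Real.exp (-β * x) * ρ t x ^ 2
      = -β * ∫ x in (0:ℝ)..1, Real.exp (-β * x) * ρ t x ^ 2 := by
    simp only [mul_assoc, integral_const_mul]
  have hCS := sq_intervalIntegral_le_mul_integral_exp_mul_sq hβ.ne'
    (hρ.continuous.comp (.prodMk_right t) : Continuous (ρ t))
  refine le_of_eq_of_le ?_ (lyapunov_derivative_le hβ hβk (hbc t ht) hCS)
  simp only [mul_zero, Real.exp_zero, mul_one, one_mul, hweighted]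
  ring

theorem stmt_10 (d k β : ℝ) (hd : |d| < 1) (hk : |k| < 1) (hβ : 0 < β)
    (hβk : k ^ 2 < Real.exp (-β)) (ρ : ℝ → ℝ → ℝ)
    (hρ : ContDiff ℝ 1 (fun p : ℝ × ℝ => ρ p.1 p.2))
    (hpde : ∀ t ≥ (0:ℝ), ∀ x ∈ Set.Icc (0:ℝ) 1,
      deriv (fun s => ρ s x) t + deriv (fun y => ρ t y) x = 0)
    (hbc : ∀ t ≥ (0:ℝ),
      ρ t 0 = k * ρ t 1 + (k - 1) * d * ∫ x in (0:ℝ)..1, ρ t x) :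
    let a := d * (Real.exp (-β) - k) / (1 - k)
    let W := fun t => ∫ x in (0:ℝ)..1, ρ t x
    let L := fun t => (∫ x in (0:ℝ)..1, Real.exp (-β * x) * ρ t x ^ 2) + a * W t ^ 2
    ∀ t ≥ (0:ℝ), ∃ D : ℝ, HasDerivAt L D t ∧
      D ≤ -β * (1 - d ^ 2 * (Real.exp β - 1) ^ 2 * Real.exp (-β) * β⁻¹ ^ 2) *
        ∫ x in (0:ℝ)..1, Real.exp (-β * x) * ρ t x ^ 2 :=
  stmt_10_general d k β hβ hβk ρ hρ hpde hbc
end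

section
/- Let |k| < 1 and d ∈ ℝ. For any C¹ solution ρ of ρ_t + ρ_x = 0 with boundary condition ρ(t,0) = kρ(t,1) + (k-1)dW(t), where W(t) = ∫₀¹ρ(t,x)dx, the function V₁(t) := ∫₀¹ ρ²(t,x) dx + d·W(t)² satisfies V̇₁(t) = (k² - 1)(ρ(t,1) + dW(t))² ≤ 0 for all t ≥ 0. -/
/-!
Since `ρ_t = -ρ_x`, for any C¹ function `φ` the time derivative of `∫₀¹ φ(ρ)` is, by the
fundamental theorem of calculus in `x`, the boundary flux `φ(ρ(t,0)) - φ(ρ(t,1))`.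
With `φ = id` and `φ = (·)²` this gives
`V̇₁ = ρ₀² - ρ₁² + 2dW(ρ₀ - ρ₁) = (ρ₀ - ρ₁)(ρ₀ + ρ₁ + 2dW)`, and the boundary condition turns
`ρ₀ - ρ₁` into `(k - 1)(ρ₁ + dW)` and `ρ₀ + ρ₁ + 2dW` into `(k + 1)(ρ₁ + dW)`.
-/

open intervalIntegral Set Function

section PartialDerivatives

variable {E : Type*} [NormedAddCommGroup E] [NormedSpace ℝ E] {F : ℝ → ℝ → E}

theorem ContDiff.uncurry_left {n : WithTop ℕ∞} (hF : ContDiff ℝ n (uncurry F)) (t : ℝ) :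
    ContDiff ℝ n (F t) :=
  hF.comp (contDiff_const.prodMk contDiff_id)

theorem ContDiff.uncurry_right {n : WithTop ℕ∞} (hF : ContDiff ℝ n (uncurry F)) (x : ℝ) :
    ContDiff ℝ n (F · x) :=
  hF.comp (contDiff_id.prodMk contDiff_const)

theorem ContDiff.continuous_uncurry_deriv_fst (hF : ContDiff ℝ 1 (uncurry F)) :
    Continuous (uncurry fun t x => deriv (F · x) t) := by
  have hpartial :
      (uncurry fun t x => deriv (F · x) t) = fun p => fderiv ℝ (uncurry F) p (1, 0) := by
    funext p
    have hline : HasDerivAt (fun s : ℝ => (s, p.2)) ((1 : ℝ), (0 : ℝ)) p.1 :=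
      (hasDerivAt_id p.1).prodMk (hasDerivAt_const p.1 p.2)
    exact ((hF.differentiable one_ne_zero p).hasFDerivAt.comp_hasDerivAt p.1 hline).deriv
  rw [hpartial]
  exact (hF.continuous_fderiv one_ne_zero).clm_apply continuous_const

theorem ContDiff.hasDerivAt_intervalIntegral [CompleteSpace E]
    (hF : ContDiff ℝ 1 (uncurry F)) (a b t₀ : ℝ) :
    HasDerivAt (fun t => ∫ x in a..b, F t x) (∫ x in a..b, deriv (F · x) t₀) t₀ := by
  have hK : IsCompact (Icc (t₀ - 1) (t₀ + 1) ×ˢ uIcc a b) := isCompact_Icc.prod isCompact_uIcc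
  obtain ⟨M, hM⟩ := hK.exists_bound_of_continuousOn hF.continuous_uncurry_deriv_fst.continuousOn
  have hslice (t : ℝ) : Continuous (F t) := hF.continuous.uncurry_left t
  refine (hasDerivAt_integral_of_dominated_loc_of_deriv_le (bound := fun _ => M)
    (Metric.ball_mem_nhds t₀ one_pos) (.of_forall fun t => (hslice t).aestronglyMeasurable)
    ((hslice t₀).intervalIntegrable a b)
    (hF.continuous_uncurry_deriv_fst.uncurry_left t₀).aestronglyMeasurable
    (.of_forall fun x hx t ht => hM (t, x) ⟨?_, uIoc_subset_uIcc hx⟩)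
    intervalIntegrable_const
    (.of_forall fun x _ t _ =>
      ((hF.uncurry_right x).differentiable one_ne_zero t).hasDerivAt)).2
  rw [Real.ball_eq_Ioo] at ht
  exact Ioo_subset_Icc_self ht

end PartialDerivatives

theorem hasDerivAt_integral_comp_of_transport {ρ : ℝ → ℝ → ℝ} {φ : ℝ → ℝ} {a b t : ℝ}
    (hab : a ≤ b) (hρ : ContDiff ℝ 1 (uncurry ρ)) (hφ : ContDiff ℝ 1 φ)
    (hpde : ∀ x ∈ Icc a b, deriv (fun s => ρ s x) t + deriv (fun y => ρ t y) x = 0) :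
    HasDerivAt (fun s => ∫ x in a..b, φ (ρ s x)) (φ (ρ t a) - φ (ρ t b)) t := by
  have hG : ContDiff ℝ 1 (uncurry fun s x => φ (ρ s x)) := hφ.comp hρ
  have hφ' (x : ℝ) : HasDerivAt φ (deriv φ x) x := (hφ.differentiable one_ne_zero x).hasDerivAt
  have hflux : ∀ x ∈ uIcc a b,
      deriv (fun s => φ (ρ s x)) t = -deriv (fun y => φ (ρ t y)) x := by
    intro x hx
    have hs : deriv (fun s => φ (ρ s x)) t = deriv φ (ρ t x) * deriv (ρ · x) t :=
      ((hφ' _).comp t ((hρ.uncurry_right x).differentiable one_ne_zero t).hasDerivAt).deriv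
    have hy : deriv (fun y => φ (ρ t y)) x = deriv φ (ρ t x) * deriv (ρ t ·) x :=
      ((hφ' _).comp x ((hρ.uncurry_left t).differentiable one_ne_zero x).hasDerivAt).deriv
    rw [hs, hy]
    linear_combination deriv φ (ρ t x) * hpde x (uIcc_of_le hab ▸ hx)
  have hFTC : ∫ x in a..b, deriv (fun y => φ (ρ t y)) x = φ (ρ t b) - φ (ρ t a) :=
    integral_deriv_of_contDiffOn_uIcc (hG.uncurry_left t).contDiffOn
  refine (hG.hasDerivAt_intervalIntegral a b t).congr_deriv ?_
  rw [integral_congr hflux, integral_neg, hFTC]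
  ring

theorem stmt_12 (k d : ℝ) (hk : |k| < 1) (ρ : ℝ → ℝ → ℝ)
    (hρ : ContDiff ℝ 1 (fun p : ℝ × ℝ => ρ p.1 p.2))
    (hpde : ∀ t ≥ (0:ℝ), ∀ x ∈ Set.Icc (0:ℝ) 1,
      deriv (fun s => ρ s x) t + deriv (fun y => ρ t y) x = 0)
    (hbc : ∀ t ≥ (0:ℝ),
      ρ t 0 = k * ρ t 1 + (k - 1) * d * ∫ x in (0:ℝ)..1, ρ t x) :
    let W := fun t => ∫ x in (0:ℝ)..1, ρ t x
    let V₁ := fun t => (∫ x in (0:ℝ)..1, ρ t x ^ 2) + d * W t ^ 2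
    ∀ t ≥ (0:ℝ),
      HasDerivAt V₁ ((k ^ 2 - 1) * (ρ t 1 + d * W t) ^ 2) t ∧
      (k ^ 2 - 1) * (ρ t 1 + d * W t) ^ 2 ≤ 0 := by
  intro W V₁ t ht
  have hW : HasDerivAt W (ρ t 0 - ρ t 1) t :=
    hasDerivAt_integral_comp_of_transport zero_le_one hρ contDiff_id (hpde t ht)
  have hL2 : HasDerivAt (fun s => ∫ x in (0:ℝ)..1, ρ s x ^ 2) (ρ t 0 ^ 2 - ρ t 1 ^ 2) t :=
    hasDerivAt_integral_comp_of_transport (φ := (· ^ 2)) zero_le_one hρ (contDiff_id.pow 2)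
      (hpde t ht)
  have hbcW : ρ t 0 = k * ρ t 1 + (k - 1) * d * W t := hbc t ht
  refine ⟨?_, mul_nonpos_of_nonpos_of_nonneg ?_ (sq_nonneg _)⟩
  · refine (hL2.add ((hW.pow 2).const_mul d)).congr_deriv ?_
    rw [hbcW]
    ring
  · nlinarith [(sq_lt_one_iff_abs_lt_one k).2 hk]
end

section
/- Let λ : ℝ → (0,∞) be continuous, k ∈ (-1,1), and β > 0 with e^(-β) > k². For any C¹ solution ρ of ρ_t + (ρλ(W(t)))_x = 0 on (0,∞)×(0,1) with W(t)=∫₀¹ρ(t,x)dx and boundary feedback ρ(t,0)λ(W(t)) = k·ρ(t,1)λ(W(t)), the Lyapunov function L(t) = ∫₀¹ e^(-βx)ρ²(t,x) dx satisfies L̇(t) = -βλ(W(t))L(t) + λ(W(t))(ρ²(t,0) - e^(-β)ρ²(t,1)) ≤ -βλ(W(t))L(t) ≤ 0 for all t ≥ 0. -/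
/-!
Differentiating under the integral sign and substituting the transport equation
`ρ_t = -λ ρ_x` turns `L'` into `-λ ∫ e^{-βx} (ρ²)_x dx`. One integration by parts moves the
derivative onto the weight, producing `-βλL` plus the boundary terms
`λ (ρ(t,0)² - e^{-β} ρ(t,1)²)`.
The feedback `ρ(t,0) = k ρ(t,1)` with `k² < e^{-β}` makes the boundary terms nonpositive.
-/

open Set Real intervalIntegral
open scoped Interval

section PartialDerivatives

variable {E : Type*} [NormedAddCommGroup E] [NormedSpace ℝ E] {f : ℝ → ℝ → E}

theorem hasDerivAt_partial_fst {t x : ℝ} (hf : DifferentiableAt ℝ (Function.uncurry f) (t, x)) :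
    HasDerivAt (fun s => f s x) (fderiv ℝ (Function.uncurry f) (t, x) (1, 0)) t :=
  (hf.hasFDerivAt.comp_hasDerivAt t ((hasDerivAt_id' t).prodMk (hasDerivAt_const t x)) :)

theorem hasDerivAt_partial_snd {t x : ℝ} (hf : DifferentiableAt ℝ (Function.uncurry f) (t, x)) :
    HasDerivAt (fun y => f t y) (fderiv ℝ (Function.uncurry f) (t, x) (0, 1)) x :=
  (hf.hasFDerivAt.comp_hasDerivAt x ((hasDerivAt_const x t).prodMk (hasDerivAt_id' x)) :)

theorem continuous_deriv_partial_fst (hf : ContDiff ℝ 1 (Function.uncurry f)) :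
    Continuous fun p : ℝ × ℝ => deriv (fun s => f s p.2) p.1 := by
  have hderiv (t x : ℝ) := (hasDerivAt_partial_fst (hf.differentiable one_ne_zero (t, x))).deriv
  simp only [hderiv]
  exact (hf.continuous_fderiv one_ne_zero).clm_apply continuous_const

theorem continuous_deriv_partial_snd (hf : ContDiff ℝ 1 (Function.uncurry f)) :
    Continuous fun p : ℝ × ℝ => deriv (fun y => f p.1 y) p.2 := by
  have hderiv (t x : ℝ) := (hasDerivAt_partial_snd (hf.differentiable one_ne_zero (t, x))).deriv
  simp only [hderiv]
  exact (hf.continuous_fderiv one_ne_zero).clm_apply continuous_const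

end PartialDerivatives

/-- Leibniz rule: a jointly continuous partial derivative is bounded on the compact set
`[t₀ - 1, t₀ + 1] × [a, b]`, which dominates the difference quotients. -/
theorem hasDerivAt_intervalIntegral_of_continuous_partial {E : Type*} [NormedAddCommGroup E]
    [NormedSpace ℝ E] {F F' : ℝ → ℝ → E} {a b t₀ : ℝ} (hF : ∀ t, Continuous (F t))
    (hF' : Continuous (Function.uncurry F'))
    (hderiv : ∀ t x, HasDerivAt (fun s => F s x) (F' t x) t) :
    HasDerivAt (fun t => ∫ x in a..b, F t x) (∫ x in a..b, F' t₀ x) t₀ := by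
  obtain ⟨C, hC⟩ := (isCompact_Icc.prod isCompact_uIcc).exists_bound_of_continuousOn
    (hF'.continuousOn (s := Icc (t₀ - 1) (t₀ + 1) ×ˢ [[a, b]]))
  have hF'_cont : Continuous (F' t₀) := hF'.comp (Continuous.prodMk_right t₀)
  refine (hasDerivAt_integral_of_dominated_loc_of_deriv_le (bound := fun _ => C)
    (Icc_mem_nhds (sub_one_lt t₀) (lt_add_one t₀))
    (.of_forall fun t => (hF t).aestronglyMeasurable) ((hF t₀).intervalIntegrable a b)
    hF'_cont.aestronglyMeasurable ?_ intervalIntegrable_const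
    (.of_forall fun x _ t _ => hderiv t x)).2
  exact .of_forall fun x hx t ht => hC (t, x) ⟨ht, uIoc_subset_uIcc hx⟩

theorem integral_exp_neg_mul_mul_deriv {v v' : ℝ → ℝ} {a b β : ℝ}
    (hv : ∀ x ∈ [[a, b]], HasDerivAt v (v' x) x)
    (hv' : IntervalIntegrable v' MeasureTheory.volume a b) :
    ∫ x in a..b, exp (-β * x) * v' x
      = exp (-β * b) * v b - exp (-β * a) * v a + β * ∫ x in a..b, exp (-β * x) * v x := by
  have hexp : ∀ x, HasDerivAt (fun x => exp (-β * x)) (-β * exp (-β * x)) x := fun x => by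
    simpa [mul_comm] using ((hasDerivAt_id x).const_mul (-β)).exp
  rw [integral_mul_deriv_eq_deriv_mul (fun x _ => hexp x) hv
    ((by fun_prop : Continuous fun x => -β * exp (-β * x)).intervalIntegrable a b) hv']
  simp only [mul_assoc, integral_const_mul]
  ring

theorem hasDerivAt_integral_exp_neg_mul_sq {ρ : ℝ → ℝ → ℝ}
    (hρ : ContDiff ℝ 1 (Function.uncurry ρ)) {a b c β t : ℝ}
    (hpde : ∀ x ∈ [[a, b]], deriv (fun s => ρ s x) t + c * deriv (fun y => ρ t y) x = 0) :
    HasDerivAt (fun t => ∫ x in a..b, exp (-β * x) * ρ t x ^ 2)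
      (-β * c * (∫ x in a..b, exp (-β * x) * ρ t x ^ 2)
        + c * (exp (-β * a) * ρ t a ^ 2 - exp (-β * b) * ρ t b ^ 2)) t := by
  have hdiff := hρ.differentiable one_ne_zero
  have hρt := continuous_deriv_partial_fst hρ
  have hρx := continuous_deriv_partial_snd hρ
  have hleibniz := hasDerivAt_intervalIntegral_of_continuous_partial (a := a) (b := b) (t₀ := t)
    (F := fun t x => exp (-β * x) * ρ t x ^ 2)
    (F' := fun t x => exp (-β * x) * (2 * ρ t x * deriv (fun s => ρ s x) t))
    (fun t => by fun_prop) (by fun_prop)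
    fun t x => by
      simpa using
        ((hasDerivAt_partial_fst (hdiff (t, x))).differentiableAt.hasDerivAt.fun_pow 2).const_mul _
  have hibp := integral_exp_neg_mul_mul_deriv (a := a) (b := b) (β := β)
    (v := fun x => ρ t x ^ 2) (v' := fun x => 2 * ρ t x * deriv (fun y => ρ t y) x)
    (fun x _ => by
      simpa using (hasDerivAt_partial_snd (hdiff (t, x))).differentiableAt.hasDerivAt.fun_pow 2)
    ((by fun_prop : Continuous fun x => 2 * ρ t x * deriv (fun y => ρ t y) x).intervalIntegrable
      a b)
  refine hleibniz.congr_deriv ?_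
  calc _ = ∫ x in a..b, -c * (exp (-β * x) * (2 * ρ t x * deriv (fun y => ρ t y) x)) := by
        refine integral_congr fun x hx => ?_
        rw [eq_neg_of_add_eq_zero_left (hpde x hx)]
        ring
    _ = _ := by
        rw [integral_const_mul, hibp]
        ring

theorem stmt_17_general (lam : ℝ → ℝ) (hlampos : ∀ s, 0 < lam s)
    (k β : ℝ) (hβ : 0 < β)
    (hβk : k ^ 2 < Real.exp (-β)) (ρ : ℝ → ℝ → ℝ)
    (hρ : ContDiff ℝ 1 (fun p : ℝ × ℝ => ρ p.1 p.2))
    (hpde : ∀ t ≥ (0:ℝ), ∀ x ∈ Set.Icc (0:ℝ) 1,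
      deriv (fun s => ρ s x) t +
        lam (∫ y in (0:ℝ)..1, ρ t y) * deriv (fun y => ρ t y) x = 0)
    (hbc : ∀ t ≥ (0:ℝ), ρ t 0 = k * ρ t 1) :
    let W := fun t => ∫ x in (0:ℝ)..1, ρ t x
    let L := fun t => ∫ x in (0:ℝ)..1, Real.exp (-β * x) * ρ t x ^ 2
    ∀ t ≥ (0:ℝ),
      HasDerivAt L (-β * lam (W t) * L t +
        lam (W t) * (ρ t 0 ^ 2 - Real.exp (-β) * ρ t 1 ^ 2)) t ∧
      -β * lam (W t) * L t +
          lam (W t) * (ρ t 0 ^ 2 - Real.exp (-β) * ρ t 1 ^ 2) ≤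
        -β * lam (W t) * L t ∧
      -β * lam (W t) * L t ≤ 0 := by
  intro W L t ht
  have hderiv := hasDerivAt_integral_exp_neg_mul_sq (a := 0) (b := 1) (β := β) hρ
    fun x hx => hpde t ht x (by rwa [uIcc_of_le zero_le_one] at hx)
  simp only [mul_zero, exp_zero, one_mul, mul_one] at hderiv
  have hL : 0 ≤ L t := integral_nonneg zero_le_one fun x _ => by positivity
  have hboundary : ρ t 0 ^ 2 - exp (-β) * ρ t 1 ^ 2 ≤ 0 := by
    rw [hbc t ht]
    nlinarith [sq_nonneg (ρ t 1)]
  have hlamW := hlampos (W t)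
  refine ⟨hderiv, ?_, ?_⟩
  · linarith [mul_nonpos_of_nonneg_of_nonpos hlamW.le hboundary]
  · linarith [mul_nonneg (mul_nonneg hβ.le hlamW.le) hL]

theorem stmt_17 (lam : ℝ → ℝ) (hlam : Continuous lam) (hlampos : ∀ s, 0 < lam s)
    (k β : ℝ) (hk : k ∈ Set.Ioo (-1:ℝ) 1) (hβ : 0 < β)
    (hβk : k ^ 2 < Real.exp (-β)) (ρ : ℝ → ℝ → ℝ)
    (hρ : ContDiff ℝ 1 (fun p : ℝ × ℝ => ρ p.1 p.2))
    (hpde : ∀ t ≥ (0:ℝ), ∀ x ∈ Set.Icc (0:ℝ) 1,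
      deriv (fun s => ρ s x) t +
        lam (∫ y in (0:ℝ)..1, ρ t y) * deriv (fun y => ρ t y) x = 0)
    (hbc : ∀ t ≥ (0:ℝ), ρ t 0 = k * ρ t 1) :
    let W := fun t => ∫ x in (0:ℝ)..1, ρ t x
    let L := fun t => ∫ x in (0:ℝ)..1, Real.exp (-β * x) * ρ t x ^ 2
    ∀ t ≥ (0:ℝ),
      HasDerivAt L (-β * lam (W t) * L t +
        lam (W t) * (ρ t 0 ^ 2 - Real.exp (-β) * ρ t 1 ^ 2)) t ∧
      -β * lam (W t) * L t +
          lam (W t) * (ρ t 0 ^ 2 - Real.exp (-β) * ρ t 1 ^ 2) ≤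
        -β * lam (W t) * L t ∧
      -β * lam (W t) * L t ≤ 0 :=
  stmt_17_general lam hlampos k β hβ hβk ρ hρ hpde hbc
end

section
/- Under the hypotheses of the previous statement with additionally ‖ρ₀‖_{L¹(0,1)} ≤ R and |W(t)| ≤ R for all t, setting b := inf_{|s|≤R} λ(s) > 0, one has L̇(t) ≤ -bβL(t), hence L(t) ≤ e^(-bβt)L(0) ≤ e^(-bβt)‖ρ₀‖²_{L²(0,1)}, and therefore ‖ρ(t,·)‖_{L²(0,1)} ≤ e^(β/2)e^(-bβt/2)‖ρ₀‖_{L²(0,1)} for all t ≥ 0 (semi-global exponential stability of 0). -/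
/-!
Multiplying `ρₜ + λ(W) ρₓ = 0` by `2 e^{-βx} ρ` and integrating by parts gives
`L' = -λ(W) ((e^{-β} - k²) ρ(t,1)² + β L)`, using `ρ(t,0) = k ρ(t,1)`. The boundary term is
nonnegative because `k² < e^{-β}`, and `|W| ≤ R` gives `λ(W) ≥ b`, so `L' ≤ -bβL` and Grönwall
yields `L t ≤ e^{-bβt} L 0`. Finally `e^{-β} ≤ e^{-βx} ≤ 1` on `[0,1]` compares `L` with the
squared `L²` norm.
-/

open intervalIntegral Set Real
open scoped Interval

section PartialDerivatives

variable {G : ℝ → ℝ → ℝ}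

theorem hasDerivAt_partial_left (hG : Differentiable ℝ (fun p : ℝ × ℝ => G p.1 p.2))
    (t x : ℝ) :
    HasDerivAt (fun s => G s x) (fderiv ℝ (fun p : ℝ × ℝ => G p.1 p.2) (t, x) (1, 0)) t :=
  ((hG (t, x)).hasFDerivAt.comp_hasDerivAt t
    ((hasDerivAt_id t).prodMk (hasDerivAt_const t x)) :)

theorem hasDerivAt_partial_right (hG : Differentiable ℝ (fun p : ℝ × ℝ => G p.1 p.2))
    (t x : ℝ) :
    HasDerivAt (fun y => G t y) (fderiv ℝ (fun p : ℝ × ℝ => G p.1 p.2) (t, x) (0, 1)) x :=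
  ((hG (t, x)).hasFDerivAt.comp_hasDerivAt x
    ((hasDerivAt_const x t).prodMk (hasDerivAt_id x)) :)

theorem ContDiff.continuous_deriv_partial_left
    (hG : ContDiff ℝ 1 (fun p : ℝ × ℝ => G p.1 p.2)) :
    Continuous (fun p : ℝ × ℝ => deriv (fun s => G s p.2) p.1) :=
  ((hG.continuous_fderiv one_ne_zero).clm_apply continuous_const).congr fun p =>
    (hasDerivAt_partial_left (hG.differentiable one_ne_zero) p.1 p.2).deriv.symm

theorem ContDiff.continuous_deriv_partial_right
    (hG : ContDiff ℝ 1 (fun p : ℝ × ℝ => G p.1 p.2)) :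
    Continuous (fun p : ℝ × ℝ => deriv (fun y => G p.1 y) p.2) :=
  ((hG.continuous_fderiv one_ne_zero).clm_apply continuous_const).congr fun p =>
    (hasDerivAt_partial_right (hG.differentiable one_ne_zero) p.1 p.2).deriv.symm

/-- The domination comes from the bound of the continuous `∂ₜG` on the compact set
`closedBall t₀ 1 ×ˢ [[a, b]]`. -/
theorem hasDerivAt_intervalIntegral_of_contDiff
    (hG : ContDiff ℝ 1 (fun p : ℝ × ℝ => G p.1 p.2)) (a b t₀ : ℝ) :
    HasDerivAt (fun t => ∫ x in a..b, G t x) (∫ x in a..b, deriv (fun s => G s x) t₀) t₀ := by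
  have hGc : Continuous (fun p : ℝ × ℝ => G p.1 p.2) := hG.continuous
  have hG'c := hG.continuous_deriv_partial_left
  have hGd := hG.differentiable one_ne_zero
  obtain ⟨C, hC⟩ :=
    ((isCompact_closedBall t₀ 1).prod isCompact_uIcc).exists_bound_of_continuousOn
      hG'c.continuousOn
  refine (hasDerivAt_integral_of_dominated_loc_of_deriv_le (bound := fun _ => C)
    (Metric.ball_mem_nhds t₀ one_pos)
    (.of_forall fun t => (hGc.comp (.prodMk_right t)).aestronglyMeasurable)
    ((hGc.comp (.prodMk_right t₀)).intervalIntegrable a b)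
    (hG'c.comp (.prodMk_right t₀)).aestronglyMeasurable
    (.of_forall fun x hx t ht =>
      hC (t, x) ⟨Metric.ball_subset_closedBall ht, uIoc_subset_uIcc hx⟩)
    intervalIntegrable_const
    (.of_forall fun x _ t _ =>
      (hasDerivAt_partial_left hGd t x).differentiableAt.hasDerivAt)).2

end PartialDerivatives

theorem IsCompact.sInf_image_pos {α : Type*} [TopologicalSpace α] {s : Set α} {f : α → ℝ}
    (hs : IsCompact s) (hne : s.Nonempty) (hf : ContinuousOn f s) (hpos : ∀ x ∈ s, 0 < f x) :
    0 < sInf (f '' s) := by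
  obtain ⟨x, hx, hxmin⟩ := hs.exists_sInf_image_eq hne hf
  exact hxmin ▸ hpos x hx

theorem le_exp_mul_of_hasDerivAt_le_mul {f f' : ℝ → ℝ} {K t : ℝ}
    (hf : ∀ s ≥ 0, HasDerivAt f (f' s) s) (bound : ∀ s ≥ 0, f' s ≤ K * f s) (ht : 0 ≤ t) :
    f t ≤ exp (K * t) * f 0 := by
  have h := le_gronwallBound_of_liminf_deriv_right_le (ε := 0) (b := t)
    (fun s hs => (hf s hs.1).continuousAt.continuousWithinAt)
    (fun s hs _ hr => (hf s hs.1).hasDerivWithinAt.liminf_right_slope_le hr) le_rfl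
    (fun s hs => by simpa using bound s hs.1) t ⟨ht, le_rfl⟩
  rwa [gronwallBound_ε0, sub_zero, mul_comm] at h

/-- The Lyapunov functional is `L t = weightedEnergy β (ρ t)`. -/
noncomputable def weightedEnergy (β : ℝ) (f : ℝ → ℝ) : ℝ :=
  ∫ x in (0:ℝ)..1, exp (-β * x) * f x ^ 2

section WeightedEnergy

variable {β : ℝ} {f f' : ℝ → ℝ}

theorem weightedEnergy_nonneg : 0 ≤ weightedEnergy β f :=
  integral_nonneg zero_le_one fun _ _ => by positivity

theorem weightedEnergy_le_integral_sq (hβ : 0 ≤ β)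
    (hf : IntervalIntegrable (fun x => f x ^ 2) MeasureTheory.volume 0 1) :
    weightedEnergy β f ≤ ∫ x in (0:ℝ)..1, f x ^ 2 := by
  refine integral_mono_on zero_le_one (hf.continuousOn_mul (by fun_prop)) hf fun x hx => ?_
  exact mul_le_of_le_one_left (sq_nonneg _) (exp_le_one_iff.2 (by nlinarith [hx.1]))

theorem integral_sq_le_exp_mul_weightedEnergy (hβ : 0 ≤ β)
    (hf : IntervalIntegrable (fun x => f x ^ 2) MeasureTheory.volume 0 1) :
    ∫ x in (0:ℝ)..1, f x ^ 2 ≤ exp β * weightedEnergy β f := by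
  rw [weightedEnergy, ← integral_const_mul]
  refine integral_mono_on zero_le_one hf
    ((hf.continuousOn_mul (by fun_prop)).const_mul _) fun x hx => ?_
  rw [← mul_assoc, ← exp_add]
  exact le_mul_of_one_le_left (sq_nonneg _) (one_le_exp (by nlinarith [hx.2]))

theorem integral_exp_mul_deriv_sq (hf : ∀ x ∈ [[(0:ℝ), 1]], HasDerivAt f (f' x) x)
    (hf' : ContinuousOn f' [[0, 1]]) :
    ∫ x in (0:ℝ)..1, exp (-β * x) * (2 * f x * f' x) =
      exp (-β) * f 1 ^ 2 - f 0 ^ 2 + β * weightedEnergy β f := by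
  have hexp : ∀ x ∈ [[(0:ℝ), 1]], HasDerivAt (fun y => exp (-β * y)) (-β * exp (-β * x)) x :=
    fun x _ => by simpa [mul_comm] using ((hasDerivAt_id x).const_mul (-β)).exp
  have hsq : ∀ x ∈ [[(0:ℝ), 1]], HasDerivAt (fun y => f y ^ 2) (2 * f x * f' x) x :=
    fun x hx => by simpa using (hf x hx).fun_pow 2
  have hfc : ContinuousOn f [[0, 1]] := fun x hx => (hf x hx).continuousAt.continuousWithinAt
  rw [integral_mul_deriv_eq_deriv_mul hexp hsq
    ((by fun_prop : Continuous fun x => -β * exp (-β * x)).intervalIntegrable 0 1)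
    (((continuousOn_const.mul hfc).mul hf').intervalIntegrable)]
  simp only [weightedEnergy, mul_one, mul_zero, exp_zero, one_mul, mul_assoc, neg_mul,
    integral_neg, integral_const_mul]
  ring

end WeightedEnergy

theorem hasDerivAt_weightedEnergy_of_transport {ρ : ℝ → ℝ → ℝ}
    (hρ : ContDiff ℝ 1 (fun p : ℝ × ℝ => ρ p.1 p.2)) {β c k t : ℝ}
    (hpde : ∀ x ∈ Icc (0:ℝ) 1, deriv (fun s => ρ s x) t + c * deriv (fun y => ρ t y) x = 0)
    (hbc : ρ t 0 = k * ρ t 1) :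
    HasDerivAt (fun s => weightedEnergy β (ρ s))
      (-c * ((exp (-β) - k ^ 2) * ρ t 1 ^ 2 + β * weightedEnergy β (ρ t))) t := by
  have hG : ContDiff ℝ 1 (fun p : ℝ × ℝ => exp (-β * p.2) * ρ p.1 p.2 ^ 2) :=
    (contDiff_exp.comp (contDiff_const.mul contDiff_snd)).mul (hρ.pow 2)
  have hρd := hρ.differentiable one_ne_zero
  have hρt : ∀ x, HasDerivAt (fun s => ρ s x) (deriv (fun s => ρ s x) t) t := fun x =>
    (hasDerivAt_partial_left hρd t x).differentiableAt.hasDerivAt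
  have hρx : ∀ x, HasDerivAt (fun y => ρ t y) (deriv (fun y => ρ t y) x) x := fun x =>
    (hasDerivAt_partial_right hρd t x).differentiableAt.hasDerivAt
  refine (hasDerivAt_intervalIntegral_of_contDiff hG 0 1 t).congr_deriv ?_
  calc ∫ x in (0:ℝ)..1, deriv (fun s => exp (-β * x) * ρ s x ^ 2) t
      = ∫ x in (0:ℝ)..1, -c * (exp (-β * x) * (2 * ρ t x * deriv (fun y => ρ t y) x)) := by
        refine integral_congr fun x hx => ?_
        rw [(((hρt x).fun_pow 2).const_mul _).deriv]
        rw [uIcc_of_le zero_le_one] at hx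
        linear_combination (2 * exp (-β * x) * ρ t x) * hpde x hx
    _ = -c * ((exp (-β) - k ^ 2) * ρ t 1 ^ 2 + β * weightedEnergy β (ρ t)) := by
        rw [integral_const_mul, integral_exp_mul_deriv_sq (fun x _ => hρx x)
          (hρ.continuous_deriv_partial_right.comp (.prodMk_right t)).continuousOn, hbc]
        ring

theorem stmt_18_general (lam : ℝ → ℝ) (hlam : Continuous lam) (hlampos : ∀ s, 0 < lam s)
    (k β R : ℝ) (hβ : 0 < β)
    (hβk : k ^ 2 < Real.exp (-β)) (hR : 0 < R) (ρ : ℝ → ℝ → ℝ) (ρ₀ : ℝ → ℝ)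
    (hρ : ContDiff ℝ 1 (fun p : ℝ × ℝ => ρ p.1 p.2))
    (hpde : ∀ t ≥ (0:ℝ), ∀ x ∈ Set.Icc (0:ℝ) 1,
      deriv (fun s => ρ s x) t +
        lam (∫ y in (0:ℝ)..1, ρ t y) * deriv (fun y => ρ t y) x = 0)
    (hbc : ∀ t ≥ (0:ℝ), ρ t 0 = k * ρ t 1)
    (hinit : ∀ x ∈ Set.Icc (0:ℝ) 1, ρ 0 x = ρ₀ x)
    (hW : ∀ t ≥ (0:ℝ), |∫ x in (0:ℝ)..1, ρ t x| ≤ R) :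
    let b := sInf (lam '' Set.Icc (-R) R)
    let L := fun t => ∫ x in (0:ℝ)..1, Real.exp (-β * x) * ρ t x ^ 2
    0 < b ∧
    (∀ t ≥ (0:ℝ), ∃ D : ℝ, HasDerivAt L D t ∧ D ≤ -b * β * L t) ∧
    (∀ t ≥ (0:ℝ), L t ≤ Real.exp (-b * β * t) * L 0 ∧
      Real.exp (-b * β * t) * L 0 ≤
        Real.exp (-b * β * t) * ∫ x in (0:ℝ)..1, ρ₀ x ^ 2) ∧
    (∀ t ≥ (0:ℝ),
      Real.sqrt (∫ x in (0:ℝ)..1, ρ t x ^ 2) ≤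
        Real.exp (β / 2) * Real.exp (-b * β * t / 2) *
          Real.sqrt (∫ x in (0:ℝ)..1, ρ₀ x ^ 2)) := by
  intro b L
  have hb : 0 < b := isCompact_Icc.sInf_image_pos (nonempty_Icc.2 (by linarith))
    hlam.continuousOn fun s _ => hlampos s
  have hb_le : ∀ t ≥ (0:ℝ), b ≤ lam (∫ y in (0:ℝ)..1, ρ t y) := fun t ht =>
    csInf_le (isCompact_Icc.bddBelow_image hlam.continuousOn)
      (mem_image_of_mem _ (abs_le.1 (hW t ht)))
  set L' : ℝ → ℝ := fun t => -lam (∫ y in (0:ℝ)..1, ρ t y) *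
    ((exp (-β) - k ^ 2) * ρ t 1 ^ 2 + β * L t)
  have hL : ∀ t ≥ (0:ℝ), HasDerivAt L (L' t) t := fun t ht =>
    hasDerivAt_weightedEnergy_of_transport hρ (hpde t ht) (hbc t ht)
  have hL'_le : ∀ t ≥ (0:ℝ), L' t ≤ -b * β * L t := by
    intro t ht
    have hA : 0 ≤ (exp (-β) - k ^ 2) * ρ t 1 ^ 2 :=
      mul_nonneg (sub_nonneg.2 hβk.le) (sq_nonneg _)
    have hE : 0 ≤ β * L t := mul_nonneg hβ.le weightedEnergy_nonneg
    simp only [L']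
    linarith [mul_nonneg (hlampos (∫ y in (0:ℝ)..1, ρ t y)).le hA,
      mul_nonneg (sub_nonneg.2 (hb_le t ht)) hE]
  have hdecay : ∀ t ≥ (0:ℝ), L t ≤ exp (-b * β * t) * L 0 := fun t ht =>
    le_exp_mul_of_hasDerivAt_le_mul hL hL'_le ht
  have hsq : ∀ t, IntervalIntegrable (fun x => ρ t x ^ 2) MeasureTheory.volume 0 1 := fun t =>
    ((hρ.continuous.comp (.prodMk_right t)).pow 2).intervalIntegrable 0 1
  have hL0 : L 0 ≤ ∫ x in (0:ℝ)..1, ρ₀ x ^ 2 := by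
    refine (weightedEnergy_le_integral_sq hβ.le (hsq 0)).trans_eq (integral_congr fun x hx => ?_)
    rw [uIcc_of_le zero_le_one] at hx
    simp only [hinit x hx]
  refine ⟨hb, fun t ht => ⟨_, hL t ht, hL'_le t ht⟩, fun t ht => ⟨hdecay t ht, by gcongr⟩,
    fun t ht => ?_⟩
  calc √(∫ x in (0:ℝ)..1, ρ t x ^ 2)
      ≤ √(exp β * (exp (-b * β * t) * ∫ x in (0:ℝ)..1, ρ₀ x ^ 2)) := by
        gcongr
        exact (integral_sq_le_exp_mul_weightedEnergy hβ.le (hsq t)).trans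
          (by gcongr; exact (hdecay t ht).trans (by gcongr))
    _ = _ := by
        rw [sqrt_mul (exp_nonneg _), sqrt_mul (exp_nonneg _), ← exp_half, ← exp_half]
        ring

theorem stmt_18 (lam : ℝ → ℝ) (hlam : Continuous lam) (hlampos : ∀ s, 0 < lam s)
    (k β R : ℝ) (hk : k ∈ Set.Ioo (-1:ℝ) 1) (hβ : 0 < β)
    (hβk : k ^ 2 < Real.exp (-β)) (hR : 0 < R) (ρ : ℝ → ℝ → ℝ) (ρ₀ : ℝ → ℝ)
    (hρ : ContDiff ℝ 1 (fun p : ℝ × ℝ => ρ p.1 p.2))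
    (hpde : ∀ t ≥ (0:ℝ), ∀ x ∈ Set.Icc (0:ℝ) 1,
      deriv (fun s => ρ s x) t +
        lam (∫ y in (0:ℝ)..1, ρ t y) * deriv (fun y => ρ t y) x = 0)
    (hbc : ∀ t ≥ (0:ℝ), ρ t 0 = k * ρ t 1)
    (hinit : ∀ x ∈ Set.Icc (0:ℝ) 1, ρ 0 x = ρ₀ x)
    (hρ₀ : (∫ x in (0:ℝ)..1, |ρ₀ x|) ≤ R)
    (hW : ∀ t ≥ (0:ℝ), |∫ x in (0:ℝ)..1, ρ t x| ≤ R) :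
    let b := sInf (lam '' Set.Icc (-R) R)
    let L := fun t => ∫ x in (0:ℝ)..1, Real.exp (-β * x) * ρ t x ^ 2
    0 < b ∧
    (∀ t ≥ (0:ℝ), ∃ D : ℝ, HasDerivAt L D t ∧ D ≤ -b * β * L t) ∧
    (∀ t ≥ (0:ℝ), L t ≤ Real.exp (-b * β * t) * L 0 ∧
      Real.exp (-b * β * t) * L 0 ≤
        Real.exp (-b * β * t) * ∫ x in (0:ℝ)..1, ρ₀ x ^ 2) ∧
    (∀ t ≥ (0:ℝ),
      Real.sqrt (∫ x in (0:ℝ)..1, ρ t x ^ 2) ≤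
        Real.exp (β / 2) * Real.exp (-b * β * t / 2) *
          Real.sqrt (∫ x in (0:ℝ)..1, ρ₀ x ^ 2)) :=
  stmt_18_general lam hlam hlampos k β R hβ hβk hR ρ ρ₀ hρ hpde hbc hinit hW
end

section
/- Let k ∈ (-1,1) and r ∈ (1,2]. For any C¹ solution ρ of ρ_t + λ(W(t))ρ_x = 0 on (0,∞)×(0,1) with λ(W(t)) > 0 and boundary condition ρ(t,0) = kρ(t,1), the function t ↦ ∫₀¹|ρ(t,x)|^r dx is nonincreasing; consequently (letting r → 1⁺) t ↦ ∫₀¹|ρ(t,x)| dx is nonincreasing, so |W(t)| ≤ ‖ρ(0,·)‖_{L¹(0,1)} for all t ≥ 0. -/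
/-!
Along a transport equation `ρ_t + c ρ_x = 0`, the integral `∫ₐᵇ φ(ρ)` of any `C¹` function `φ`
changes only through the boundary flux: its time derivative is `c (φ(ρ(t,a)) - φ(ρ(t,b)))`.
For `φ = |·|^r` with `r > 1`, which is `C¹`, the boundary condition `ρ(t,0) = k ρ(t,1)` with
`|k| ≤ 1` makes this flux nonpositive. Letting `r → 1⁺` under dominated convergence
(with dominating function `1 + |ρ|²`) gives monotonicity of the `L¹` norm, which bounds `|W(t)|`.
-/

open intervalIntegral
open MeasureTheory Filter Topology Set

section PartialDerivatives

variable {E : Type*} [NormedAddCommGroup E] [NormedSpace ℝ E] {ρ : ℝ → ℝ → E}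

theorem hasDerivAt_fst_of_contDiff (hρ : ContDiff ℝ 1 (fun p : ℝ × ℝ => ρ p.1 p.2)) (t x : ℝ) :
    HasDerivAt (fun s => ρ s x) (fderiv ℝ (fun p : ℝ × ℝ => ρ p.1 p.2) (t, x) (1, 0)) t := by
  have := (hρ.differentiable one_ne_zero (t, x)).hasFDerivAt.comp_hasDerivAt t
    ((hasDerivAt_id t).prodMk (hasDerivAt_const t x))
  exact this

theorem hasDerivAt_snd_of_contDiff (hρ : ContDiff ℝ 1 (fun p : ℝ × ℝ => ρ p.1 p.2)) (t x : ℝ) :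
    HasDerivAt (fun y => ρ t y) (fderiv ℝ (fun p : ℝ × ℝ => ρ p.1 p.2) (t, x) (0, 1)) x := by
  have := (hρ.differentiable one_ne_zero (t, x)).hasFDerivAt.comp_hasDerivAt x
    ((hasDerivAt_const x t).prodMk (hasDerivAt_id x))
  exact this

theorem continuous_deriv_fst_of_contDiff (hρ : ContDiff ℝ 1 (fun p : ℝ × ℝ => ρ p.1 p.2)) :
    Continuous fun p : ℝ × ℝ => deriv (fun s => ρ s p.2) p.1 := by
  simp_rw [fun p : ℝ × ℝ => (hasDerivAt_fst_of_contDiff hρ p.1 p.2).deriv]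
  exact (hρ.continuous_fderiv one_ne_zero).clm_apply continuous_const

theorem continuous_deriv_snd_of_contDiff (hρ : ContDiff ℝ 1 (fun p : ℝ × ℝ => ρ p.1 p.2)) :
    Continuous fun p : ℝ × ℝ => deriv (fun y => ρ p.1 y) p.2 := by
  simp_rw [fun p : ℝ × ℝ => (hasDerivAt_snd_of_contDiff hρ p.1 p.2).deriv]
  exact (hρ.continuous_fderiv one_ne_zero).clm_apply continuous_const

end PartialDerivatives

theorem hasDerivAt_intervalIntegral_of_continuous_deriv {E : Type*} [NormedAddCommGroup E]
    [NormedSpace ℝ E] {f f' : ℝ → ℝ → E} {a b : ℝ}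
    (hf : Continuous fun p : ℝ × ℝ => f p.1 p.2) (hf' : Continuous fun p : ℝ × ℝ => f' p.1 p.2)
    (hderiv : ∀ s x, HasDerivAt (fun s => f s x) (f' s x) s) (t : ℝ) :
    HasDerivAt (fun s => ∫ x in a..b, f s x) (∫ x in a..b, f' t x) t := by
  obtain ⟨C, hC⟩ := (isCompact_Icc (a := t - 1) (b := t + 1)).prod isCompact_uIcc
    |>.exists_bound_of_continuousOn (f := fun p : ℝ × ℝ => f' p.1 p.2) hf'.continuousOn
  refine (hasDerivAt_integral_of_dominated_loc_of_deriv_le (bound := fun _ => C)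
    (Metric.ball_mem_nhds t one_pos) ?_ ?_ ?_ ?_ intervalIntegrable_const ?_).2
  · exact .of_forall fun s => (hf.comp (.prodMk_right s)).aestronglyMeasurable
  · exact (hf.comp (.prodMk_right t)).intervalIntegrable a b
  · exact (hf'.comp (.prodMk_right t)).aestronglyMeasurable
  · refine .of_forall fun x hx s hs => hC (s, x) ⟨?_, uIoc_subset_uIcc hx⟩
    rw [Metric.mem_ball, Real.dist_eq, abs_lt] at hs
    constructor <;> linarith
  · exact .of_forall fun x _ s _ => hderiv s x

theorem hasDerivAt_intervalIntegral_comp_of_transport {φ : ℝ → ℝ} (hφ : ContDiff ℝ 1 φ)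
    {ρ : ℝ → ℝ → ℝ} (hρ : ContDiff ℝ 1 (fun p : ℝ × ℝ => ρ p.1 p.2)) {a b c t : ℝ}
    (htransport : ∀ x ∈ uIcc a b,
      deriv (fun s => ρ s x) t + c * deriv (fun y => ρ t y) x = 0) :
    HasDerivAt (fun s => ∫ x in a..b, φ (ρ s x)) (c * (φ (ρ t a) - φ (ρ t b))) t := by
  have hφ' : Continuous (deriv φ) := hφ.continuous_deriv le_rfl
  have hdφ : ∀ y, HasDerivAt φ (deriv φ y) y :=
    fun y => (hφ.differentiable one_ne_zero y).hasDerivAt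
  have hleibniz := hasDerivAt_intervalIntegral_of_continuous_deriv (a := a) (b := b)
    (f := fun s x => φ (ρ s x)) (f' := fun s x => deriv φ (ρ s x) * deriv (fun s => ρ s x) s)
    (hφ.continuous.comp hρ.continuous)
    ((hφ'.comp hρ.continuous).mul (continuous_deriv_fst_of_contDiff hρ))
    (fun s x => (hdφ _).comp s (hasDerivAt_fst_of_contDiff hρ s x).differentiableAt.hasDerivAt) t
  have hcont : Continuous fun x => deriv φ (ρ t x) * deriv (fun y => ρ t y) x :=
    ((hφ'.comp hρ.continuous).mul (continuous_deriv_snd_of_contDiff hρ)).comp (.prodMk_right t)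
  have hftc : ∫ x in a..b, deriv φ (ρ t x) * deriv (fun y => ρ t y) x =
      φ (ρ t b) - φ (ρ t a) :=
    integral_eq_sub_of_hasDerivAt
      (fun x _ => (hdφ _).comp x (hasDerivAt_snd_of_contDiff hρ t x).differentiableAt.hasDerivAt)
      (hcont.intervalIntegrable a b)
  refine hleibniz.congr_deriv ?_
  calc ∫ x in a..b, deriv φ (ρ t x) * deriv (fun s => ρ s x) t
      = ∫ x in a..b, -c * (deriv φ (ρ t x) * deriv (fun y => ρ t y) x) :=
        integral_congr fun x hx => by linear_combination deriv φ (ρ t x) * htransport x hx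
    _ = c * (φ (ρ t a) - φ (ρ t b)) := by rw [intervalIntegral.integral_const_mul, hftc]; ring

theorem antitoneOn_intervalIntegral_abs_rpow_of_transport {c : ℝ → ℝ} (hc : ∀ t ≥ 0, 0 ≤ c t)
    {k r : ℝ} (hk : |k| ≤ 1) (hr : 1 < r) {ρ : ℝ → ℝ → ℝ}
    (hρ : ContDiff ℝ 1 (fun p : ℝ × ℝ => ρ p.1 p.2))
    (hpde : ∀ t ≥ (0:ℝ), ∀ x ∈ Icc (0:ℝ) 1,
      deriv (fun s => ρ s x) t + c t * deriv (fun y => ρ t y) x = 0)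
    (hbc : ∀ t ≥ (0:ℝ), ρ t 0 = k * ρ t 1) :
    AntitoneOn (fun t => ∫ x in (0:ℝ)..1, |ρ t x| ^ r) (Ici 0) := by
  have hφ : ContDiff ℝ 1 fun y : ℝ => |y| ^ r := by
    simpa only [Real.norm_eq_abs] using contDiff_norm_rpow (E := ℝ) hr
  have hderiv : ∀ t ≥ (0:ℝ), HasDerivAt (fun s => ∫ x in (0:ℝ)..1, |ρ s x| ^ r)
      (c t * (|ρ t 0| ^ r - |ρ t 1| ^ r)) t := fun t ht =>
    hasDerivAt_intervalIntegral_comp_of_transport hφ hρ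
      (fun x hx => hpde t ht x (by rwa [uIcc_of_le zero_le_one] at hx))
  have hboundary : ∀ t ≥ (0:ℝ), |ρ t 0| ^ r ≤ |ρ t 1| ^ r := fun t ht => by
    rw [hbc t ht, abs_mul]
    exact Real.rpow_le_rpow (by positivity) (mul_le_of_le_one_left (abs_nonneg _) hk)
      (by linarith)
  refine antitoneOn_of_deriv_nonpos (convex_Ici 0) ?_ ?_ fun t ht => ?_
  · exact HasDerivAt.continuousOn fun t ht => hderiv t ht
  · rw [interior_Ici]
    exact fun t ht => (hderiv t (ht.le)).differentiableAt.differentiableWithinAt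
  · rw [interior_Ici] at ht
    rw [(hderiv t (ht.le)).deriv]
    exact mul_nonpos_of_nonneg_of_nonpos (hc t ht.le) (sub_nonpos.2 (hboundary t ht.le))

theorem Real.rpow_le_one_add_rpow {x r s : ℝ} (hx : 0 ≤ x) (hr : 0 ≤ r) (hrs : r ≤ s) :
    x ^ r ≤ 1 + x ^ s := by
  rcases le_total x 1 with hx1 | hx1
  · linarith [Real.rpow_le_one hx hx1 hr, Real.rpow_nonneg hx s]
  · linarith [Real.rpow_le_rpow_of_exponent_le hx1 hrs]

theorem tendsto_intervalIntegral_abs_rpow_nhdsGT_one {g : ℝ → ℝ} (hg : Continuous g) (a b : ℝ) :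
    Tendsto (fun r : ℝ => ∫ x in a..b, |g x| ^ r) (𝓝[>] 1) (𝓝 (∫ x in a..b, |g x|)) := by
  have hIoc : ∀ᶠ r in 𝓝[>] (1:ℝ), r ∈ Ioc 1 2 := Ioc_mem_nhdsGT one_lt_two
  refine tendsto_integral_filter_of_dominated_convergence (fun x => 1 + |g x| ^ (2:ℝ)) ?_ ?_ ?_ ?_
  · refine hIoc.mono fun r hr => ?_
    exact (hg.abs.rpow_const fun _ => Or.inr (by linarith [hr.1])).aestronglyMeasurable
  · refine hIoc.mono fun r hr => .of_forall fun x _ => ?_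
    rw [Real.norm_of_nonneg (by positivity)]
    exact Real.rpow_le_one_add_rpow (abs_nonneg _) (by linarith [hr.1]) hr.2
  · exact (continuous_const.add (hg.abs.rpow_const fun _ => Or.inr zero_le_two)).intervalIntegrable
      a b
  · refine .of_forall fun x _ => ?_
    simpa only [Real.rpow_one] using
      (Real.continuousAt_const_rpow' one_ne_zero).tendsto.mono_left nhdsWithin_le_nhds

theorem AntitoneOn.of_tendsto {ι α β : Type*} [Preorder α] [TopologicalSpace β] [Preorder β]
    [OrderClosedTopology β] {l : Filter ι} [l.NeBot] {f : ι → α → β} {g : α → β} {s : Set α}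
    (hf : ∀ᶠ i in l, AntitoneOn (f i) s) (hlim : ∀ x ∈ s, Tendsto (fun i => f i x) l (𝓝 (g x))) :
    AntitoneOn g s := fun _ ha _ hb hab =>
  le_of_tendsto_of_tendsto (hlim _ hb) (hlim _ ha) (hf.mono fun _ hi => hi ha hb hab)

theorem stmt_19_general (lam : ℝ → ℝ) (hlampos : ∀ s, 0 < lam s)
    (k r : ℝ) (hk : k ∈ Set.Ioo (-1:ℝ) 1) (hr : r ∈ Set.Ioc (1:ℝ) 2)
    (ρ : ℝ → ℝ → ℝ)
    (hρ : ContDiff ℝ 1 (fun p : ℝ × ℝ => ρ p.1 p.2))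
    (hpde : ∀ t ≥ (0:ℝ), ∀ x ∈ Set.Icc (0:ℝ) 1,
      deriv (fun s => ρ s x) t +
        lam (∫ y in (0:ℝ)..1, ρ t y) * deriv (fun y => ρ t y) x = 0)
    (hbc : ∀ t ≥ (0:ℝ), ρ t 0 = k * ρ t 1) :
    AntitoneOn (fun t => ∫ x in (0:ℝ)..1, |ρ t x| ^ r) (Set.Ici 0) ∧
    AntitoneOn (fun t => ∫ x in (0:ℝ)..1, |ρ t x|) (Set.Ici 0) ∧
    ∀ t ≥ (0:ℝ), |∫ x in (0:ℝ)..1, ρ t x| ≤ ∫ x in (0:ℝ)..1, |ρ 0 x| := by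
  have hLr : ∀ r' : ℝ, 1 < r' → AntitoneOn (fun t => ∫ x in (0:ℝ)..1, |ρ t x| ^ r') (Ici 0) :=
    fun _ hr' => antitoneOn_intervalIntegral_abs_rpow_of_transport (fun _ _ => (hlampos _).le)
      (abs_le.2 ⟨hk.1.le, hk.2.le⟩) hr' hρ hpde hbc
  have hL1 : AntitoneOn (fun t => ∫ x in (0:ℝ)..1, |ρ t x|) (Ici 0) :=
    .of_tendsto (l := 𝓝[>] 1) (eventually_mem_nhdsWithin.mono hLr) fun t _ =>
      tendsto_intervalIntegral_abs_rpow_nhdsGT_one (hρ.continuous.comp (.prodMk_right t)) 0 1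
  refine ⟨hLr r hr.1, hL1, fun t ht => ?_⟩
  calc |∫ x in (0:ℝ)..1, ρ t x| ≤ ∫ x in (0:ℝ)..1, |ρ t x| :=
        abs_integral_le_integral_abs zero_le_one
    _ ≤ ∫ x in (0:ℝ)..1, |ρ 0 x| := hL1 self_mem_Ici ht ht

theorem stmt_19 (lam : ℝ → ℝ) (hlam : Continuous lam) (hlampos : ∀ s, 0 < lam s)
    (k r : ℝ) (hk : k ∈ Set.Ioo (-1:ℝ) 1) (hr : r ∈ Set.Ioc (1:ℝ) 2)
    (ρ : ℝ → ℝ → ℝ)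
    (hρ : ContDiff ℝ 1 (fun p : ℝ × ℝ => ρ p.1 p.2))
    (hpde : ∀ t ≥ (0:ℝ), ∀ x ∈ Set.Icc (0:ℝ) 1,
      deriv (fun s => ρ s x) t +
        lam (∫ y in (0:ℝ)..1, ρ t y) * deriv (fun y => ρ t y) x = 0)
    (hbc : ∀ t ≥ (0:ℝ), ρ t 0 = k * ρ t 1) :
    AntitoneOn (fun t => ∫ x in (0:ℝ)..1, |ρ t x| ^ r) (Set.Ici 0) ∧
    AntitoneOn (fun t => ∫ x in (0:ℝ)..1, |ρ t x|) (Set.Ici 0) ∧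
    ∀ t ≥ (0:ℝ), |∫ x in (0:ℝ)..1, ρ t x| ≤ ∫ x in (0:ℝ)..1, |ρ 0 x| :=
  stmt_19_general lam hlampos k r hk hr ρ hρ hpde hbc
end
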